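/- arXiv:1207.2414 — 2 statements merged into one kernel-verified Lean document; each statement's English description precedes it below -/
import Mathlib

section
/- Suppose W ∈ C³ satisfies condition (a'), that W''(0) < 0 if W'(0) = 0, and that W'(t) < 0 for all t ∈ (0, μ). Then the only classical solutions u ∈ C²(ℝⁿ) of the entire equation Δu = W'(u) on ℝⁿ that satisfy 0 ≤ u(x) ≤ μ for all x ∈ ℝⁿ are the constant solutions u ≡ 0 and u ≡ μ. -/
open Metric Set Filter Pointwise

noncomputable section

/-- The Laplacian of `u : ℝⁿ → ℝ`: the sum of the second partial derivatives. -/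
def lap {n : ℕ} (u : EuclideanSpace ℝ (Fin n) → ℝ) (x : EuclideanSpace ℝ (Fin n)) : ℝ :=
  ∑ i : Fin n, fderiv ℝ (fun y => fderiv ℝ u y (EuclideanSpace.single i 1)) x
    (EuclideanSpace.single i 1)

/-- Condition (a'): `W` is `C²`, `μ > 0`, `W μ = 0`, `W > 0` on `[0, μ)`, `W ≥ 0` everywhere,
and either `W(-t) ≥ W(t)` on `[0, μ]` or `W' < 0` on `(-∞, 0)`. -/
def CondA' (W : ℝ → ℝ) (μ : ℝ) : Prop :=
  ContDiff ℝ 2 W ∧ 0 < μ ∧ W μ = 0 ∧ (∀ t ∈ Set.Ico (0:ℝ) μ, 0 < W t) ∧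
    (∀ t : ℝ, 0 ≤ W t) ∧
    ((∀ t ∈ Set.Icc (0:ℝ) μ, W t ≤ W (-t)) ∨ (∀ t < (0:ℝ), deriv W t < 0))

/-- `U` is the heteroclinic profile: `U'' = W'(U)` on `(0, ∞)`, `U 0 = 0`, `U → μ` at `∞`. -/
def IsHetero (W : ℝ → ℝ) (μ : ℝ) (U : ℝ → ℝ) : Prop :=
  ContDiffOn ℝ 2 U (Set.Ici 0) ∧ U 0 = 0 ∧
    (∀ s > (0:ℝ), deriv (deriv U) s = deriv W (U s)) ∧
    Filter.Tendsto U Filter.atTop (nhds μ)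

/-- `Ω` has boundary of class `C²`, via local `C²` defining functions. -/
def HasC2Boundary {n : ℕ} (Ω : Set (EuclideanSpace ℝ (Fin n))) : Prop :=
  ∀ x ∈ frontier Ω, ∃ (V : Set (EuclideanSpace ℝ (Fin n))) (f : EuclideanSpace ℝ (Fin n) → ℝ),
    IsOpen V ∧ x ∈ V ∧ ContDiffOn ℝ 2 f V ∧ (∀ y ∈ V, fderiv ℝ f y ≠ 0) ∧
    Ω ∩ V = {y ∈ V | f y < 0} ∧ frontier Ω ∩ V = {y ∈ V | f y = 0}


open Topology Real

/-! `u` is compared with explicit barriers at an interior minimum, where the Laplacian is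
nonnegative. If `W' ≤ -c < 0` on `[m, θ]` and `u ≥ m`, then `u ≥ θ`: around a point where
`u < θ`, subtracting `(θ - m) φ` from `u`, with `φ = ∏ cos (k (yⱼ - cⱼ))` a cosine product of small
Laplacian vanishing on the boundary of a large cube, would create an interior minimum with
negative Laplacian. If `W'(0) < 0` this applies with `m = 0` to every `θ < μ`, so `u ≡ μ`.
If `W'(0) = 0` then `W''(0) < 0` gives `W'(t) ≤ -a t` on some `[0, δ]`. Since `W' ≤ 0` on `[0, μ]`,
`u` is superharmonic, so by the strong minimum principle (Hopf's lemma with a Gaussian barrier)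
either `u ≡ 0` or `u > 0`. In the latter case, sliding a multiple of a cosine product with
Laplacian `-(a/2) φ` under `u` shows `u > δ`, and the first argument with `m = δ` gives `u ≡ μ`.
-/

lemma IsLocalMin.deriv_deriv_nonneg {f : ℝ → ℝ} {x : ℝ} (h : IsLocalMin f x)
    (hc : ContinuousAt f x) : 0 ≤ deriv (deriv f) x := by
  by_contra! hneg
  have hmax := isLocalMax_of_deriv_deriv_neg hneg h.deriv_eq_zero hc
  have hconst : f =ᶠ[𝓝 x] fun _ => f x := (h.and hmax).mono fun y hy => le_antisymm hy.2 hy.1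
  have := hconst.deriv.deriv_eq
  simp only [deriv_const'] at this
  exact hneg.ne (by simpa using this)

lemma HasDerivAt.nonneg_of_eventually_ge_right {F : ℝ → ℝ} {L x : ℝ} (hF : HasDerivAt F L x)
    (h : ∀ᶠ t in 𝓝[>] x, F x ≤ F t) : 0 ≤ L := by
  have hslope : Tendsto (slope F x) (𝓝[>] x) (𝓝 L) :=
    hF.tendsto_slope.mono_left (nhdsWithin_mono x fun t ht => ne_of_gt ht)
  refine ge_of_tendsto hslope ?_
  filter_upwards [h, self_mem_nhdsWithin] with t ht hxt
  rw [slope_def_field]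
  exact div_nonneg (sub_nonneg.2 ht) (sub_nonneg.2 (le_of_lt hxt))

lemma exists_forall_le_mul_of_hasDerivAt {f : ℝ → ℝ} {L : ℝ} (hf : HasDerivAt f L 0)
    (h0 : f 0 = 0) (hL : L < 0) : ∃ δ > 0, ∀ t ∈ Icc 0 δ, f t ≤ L / 2 * t := by
  have hslope : Tendsto (slope f 0) (𝓝[>] 0) (𝓝 L) :=
    hf.tendsto_slope.mono_left (nhdsWithin_mono _ fun t ht => ne_of_gt ht)
  obtain ⟨δ, hδ, hsub⟩ :=
    mem_nhdsGT_iff_exists_Ioc_subset.1 (hslope.eventually_lt_const (by linarith : L < L / 2))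
  refine ⟨δ, hδ, fun t ht => ?_⟩
  rcases ht.1.eq_or_lt with rfl | htpos
  · simp [h0]
  have : slope f 0 t < L / 2 := hsub ⟨htpos, ht.2⟩
  rw [slope_def_field, h0, sub_zero, sub_zero, div_lt_iff₀ htpos] at this
  exact this.le

lemma deriv_deriv_sub_const_mul {g h : ℝ → ℝ} (hg : ContDiff ℝ 2 g) (hh : ContDiff ℝ 2 h)
    (c x : ℝ) :
    deriv (deriv fun t => g t - c * h t) x = deriv (deriv g) x - c * deriv (deriv h) x := by
  have hd : deriv (fun t => g t - c * h t) = fun t => deriv g t - c * deriv h t := by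
    funext t
    rw [deriv_fun_sub (hg.differentiable two_ne_zero t)
      ((hh.differentiable two_ne_zero t).const_mul c), deriv_const_mul_field]
  rw [hd, deriv_fun_sub (hg.differentiable_deriv_two x)
    ((hh.differentiable_deriv_two x).const_mul c), deriv_const_mul_field]

lemma deriv_deriv_cos_mul (k s : ℝ) :
    deriv (deriv fun t => cos (k * t)) s = -k ^ 2 * cos (k * s) := by
  have h1 (t : ℝ) : HasDerivAt (fun t => cos (k * t)) (-(k * sin (k * t))) t :=
    ((hasDerivAt_id' t).const_mul k).cos.congr_deriv (by ring)
  have h2 : HasDerivAt (fun t => -(k * sin (k * t))) (-k ^ 2 * cos (k * s)) s :=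
    (((hasDerivAt_id' s).const_mul k).sin.const_mul k).fun_neg.congr_deriv (by ring)
  rw [funext fun t => (h1 t).deriv, h2.deriv]

lemma deriv_deriv_exp_neg_mul_sq (α s : ℝ) :
    deriv (deriv fun t => exp (-(α * t ^ 2))) s
      = (4 * α ^ 2 * s ^ 2 - 2 * α) * exp (-(α * s ^ 2)) := by
  have h1 (t : ℝ) : HasDerivAt (fun t => exp (-(α * t ^ 2)))
      (-(2 * α * t) * exp (-(α * t ^ 2))) t :=
    ((hasDerivAt_pow 2 t).const_mul α).fun_neg.exp.congr_deriv (by push_cast; ring)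
  have h2 : HasDerivAt (fun t => -(2 * α * t) * exp (-(α * t ^ 2)))
      ((4 * α ^ 2 * s ^ 2 - 2 * α) * exp (-(α * s ^ 2))) s :=
    (((hasDerivAt_id' s).const_mul (2 * α)).fun_neg.fun_mul (h1 s)).congr_deriv (by ring)
  rw [funext fun t => (h1 t).deriv, h2.deriv]

lemma exists_touching {X : Type*} [TopologicalSpace X] {K : Set X} (hK : IsCompact K)
    {u φ : X → ℝ} (hu : ContinuousOn u K) (hφ : ContinuousOn φ K) (hu0 : ∀ x ∈ K, 0 ≤ u x)
    (hφ1 : ∀ x ∈ K, φ x ≤ 1) {x1 : X} (hx1 : x1 ∈ K) (hφx1 : 0 < φ x1) :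
    ∃ s, 0 ≤ s ∧ (∀ x ∈ K, s * φ x ≤ u x) ∧ ∃ x ∈ K, u x = s * φ x := by
  set S : Set ℝ := Ici 0 ∩ ⋂ x ∈ K, {s | s * φ x ≤ u x}
  have hmemS {s : ℝ} : s ∈ S ↔ 0 ≤ s ∧ ∀ x ∈ K, s * φ x ≤ u x := by simp [S]
  have hSbdd : BddAbove S :=
    ⟨u x1 / φ x1, fun s hs => (le_div_iff₀ hφx1).2 ((hmemS.1 hs).2 x1 hx1)⟩
  have hSclosed : IsClosed S := isClosed_Ici.inter <| isClosed_biInter fun x _ =>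
    isClosed_le (continuous_id.mul continuous_const) continuous_const
  have hS0 : (0 : ℝ) ∈ S := hmemS.2 ⟨le_rfl, fun x hx => by simpa using hu0 x hx⟩
  obtain ⟨hs0, hsu⟩ := hmemS.1 (hSclosed.csSup_mem ⟨0, hS0⟩ hSbdd)
  refine ⟨sSup S, hs0, hsu, ?_⟩
  by_contra! hne
  obtain ⟨y, hyK, hmin⟩ := hK.exists_isMinOn (f := fun x => u x - sSup S * φ x) ⟨x1, hx1⟩
    (hu.sub (continuousOn_const.mul hφ))
  have hgap : 0 < u y - sSup S * φ y := sub_pos.2 ((hsu y hyK).lt_of_ne (hne y hyK).symm)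
  have hmore : sSup S + (u y - sSup S * φ y) ∈ S := hmemS.2 ⟨by positivity, fun x hx => by
    have := mul_le_mul_of_nonneg_left (hφ1 x hx) hgap.le
    have : u y - sSup S * φ y ≤ u x - sSup S * φ x := hmin hx
    nlinarith⟩
  linarith [le_csSup hSbdd hmore]

namespace MaximumPrinciple

variable {n : ℕ}

local notation "E" => EuclideanSpace ℝ (Fin n)

lemma hasDerivAt_comp_line {v : E → ℝ} (hv : Differentiable ℝ v) (x w : E) (t : ℝ) :
    HasDerivAt (fun t : ℝ => v (x + t • w)) (fderiv ℝ v (x + t • w) w) t :=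
  (hv _).hasFDerivAt.comp_hasDerivAt t
    (by simpa using ((hasDerivAt_id t).smul_const w).const_add x)

lemma deriv_deriv_comp_line {v : E → ℝ} (hv : ContDiff ℝ 2 v) (x w : E) :
    deriv (deriv fun t : ℝ => v (x + t • w)) 0 = fderiv ℝ (fun y => fderiv ℝ v y w) x w := by
  have hd : deriv (fun t : ℝ => v (x + t • w)) = fun t => fderiv ℝ v (x + t • w) w :=
    funext fun t => (hasDerivAt_comp_line (hv.differentiable two_ne_zero) x w t).deriv
  have hv' : Differentiable ℝ fun y => fderiv ℝ v y w :=
    ((hv.fderiv_right (m := 1) le_rfl).differentiable one_ne_zero).clm_apply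
      (differentiable_const w)
  simpa [hd] using (hasDerivAt_comp_line hv' x w 0).deriv

lemma lap_eq_sum_deriv_deriv {v : E → ℝ} (hv : ContDiff ℝ 2 v) (x : E) :
    lap v x = ∑ i, deriv (deriv fun t : ℝ => v (x + t • EuclideanSpace.single i 1)) 0 := by
  simp only [lap, deriv_deriv_comp_line hv]

lemma lap_nonneg_of_isLocalMin {v : E → ℝ} (hv : ContDiff ℝ 2 v) {x : E} (h : IsLocalMin v x) :
    0 ≤ lap v x := by
  rw [lap_eq_sum_deriv_deriv hv]
  refine Finset.sum_nonneg fun i _ => ?_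
  have hline : Continuous fun t : ℝ => x + t • (EuclideanSpace.single i 1 : E) := by fun_prop
  refine IsLocalMin.deriv_deriv_nonneg ?_ (hv.continuous.comp hline).continuousAt
  simpa [IsLocalMin, IsMinFilter] using (hline.tendsto' 0 x (by simp)).eventually h

lemma lap_sub_const_mul {v w : E → ℝ} (hv : ContDiff ℝ 2 v) (hw : ContDiff ℝ 2 w) (c : ℝ)
    (x : E) : lap (fun y => v y - c * w y) x = lap v x - c * lap w x := by
  rw [lap_eq_sum_deriv_deriv (hv.sub (contDiff_const.mul hw)), lap_eq_sum_deriv_deriv hv,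
    lap_eq_sum_deriv_deriv hw, Finset.mul_sum, ← Finset.sum_sub_distrib]
  exact Finset.sum_congr rfl fun i _ =>
    deriv_deriv_sub_const_mul (hv.comp (by fun_prop)) (hw.comp (by fun_prop)) c 0

lemma contDiff_prod_comp_sub {f : ℝ → ℝ} (hf : ContDiff ℝ 2 f) (c : E) :
    ContDiff ℝ 2 fun y : E => ∏ j, f (y j - c j) :=
  contDiff_prod fun j _ => hf.comp (by fun_prop)

lemma prod_comp_sub_line (f : ℝ → ℝ) (c x : E) (i : Fin n) (t : ℝ) :
    ∏ j, f ((x + t • EuclideanSpace.single i 1 : E) j - c j)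
      = (∏ j ∈ Finset.univ.erase i, f (x j - c j)) * f (x i - c i + t) := by
  rw [← Finset.mul_prod_erase _ _ (Finset.mem_univ i), mul_comm]
  congr 1
  · refine Finset.prod_congr rfl fun j hj => ?_
    simp [Finset.ne_of_mem_erase hj]
  · simp [add_sub_right_comm]

lemma lap_prod_comp_sub {f h : ℝ → ℝ} (hf : ContDiff ℝ 2 f)
    (hfh : ∀ s, deriv (deriv f) s = h s * f s) (c x : E) :
    lap (fun y : E => ∏ j, f (y j - c j)) x = (∑ i, h (x i - c i)) * ∏ j, f (x j - c j) := by
  rw [lap_eq_sum_deriv_deriv (contDiff_prod_comp_sub hf c), Finset.sum_mul]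
  refine Finset.sum_congr rfl fun i _ => ?_
  simp only [prod_comp_sub_line, deriv_const_mul_field', deriv_comp_const_add, add_zero, hfh]
  rw [← Finset.mul_prod_erase _ _ (Finset.mem_univ i)]
  ring

def cube (c : E) (r : ℝ) : Set E := {y | ∀ j, |y j - c j| ≤ r}

def cosProd (k : ℝ) (c y : E) : ℝ := ∏ j, cos (k * (y j - c j))

def gaussian (α : ℝ) (c y : E) : ℝ := exp (-(α * ‖y - c‖ ^ 2))

lemma self_mem_cube (c : E) {r : ℝ} (hr : 0 ≤ r) : c ∈ cube c r := fun j => by simpa using hr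

lemma isCompact_cube (c : E) (r : ℝ) : IsCompact (cube c r) := by
  have hcube : cube c r = EuclideanSpace.equiv (Fin n) ℝ ⁻¹'
      univ.pi fun j => Icc (c j - r) (c j + r) := by
    ext y
    simp only [cube, mem_ofPred_eq, mem_preimage, mem_univ_pi, mem_Icc, abs_le,
      PiLp.coe_continuousLinearEquiv]
    exact forall_congr' fun j => by constructor <;> intro h <;> constructor <;> linarith [h.1, h.2]
  rw [hcube]
  exact (EuclideanSpace.equiv (Fin n) ℝ).toHomeomorph.isCompact_preimage.2
    (isCompact_univ_pi fun j => isCompact_Icc)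

lemma cube_mem_nhds {c y : E} {r : ℝ} (hy : ∀ j, |y j - c j| < r) : cube c r ∈ 𝓝 y := by
  have hopen : IsOpen {y : E | ∀ j, |y j - c j| < r} := by
    simp only [ofPred_forall]
    exact isOpen_iInter_of_finite fun j => isOpen_lt (by fun_prop) continuous_const
  exact mem_of_superset (hopen.mem_nhds hy) fun y hy j => (hy j).le

lemma contDiff_cosProd (k : ℝ) (c : E) : ContDiff ℝ 2 (cosProd k c) :=
  contDiff_prod_comp_sub (f := fun t => cos (k * t)) (by fun_prop) c

lemma lap_cosProd (k : ℝ) (c x : E) : lap (cosProd k c) x = -(n * k ^ 2) * cosProd k c x :=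
  (lap_prod_comp_sub (f := fun t => cos (k * t)) (by fun_prop) (deriv_deriv_cos_mul k) c
    x).trans (by simp [cosProd])

lemma cosProd_self (k : ℝ) (c : E) : cosProd k c c = 1 := by simp [cosProd]

lemma cosProd_le_one (k : ℝ) (c y : E) : cosProd k c y ≤ 1 :=
  (le_abs_self _).trans <| by
    rw [cosProd, Finset.abs_prod]
    exact Finset.prod_le_one (fun j _ => abs_nonneg _) fun j _ => abs_cos_le_one _

lemma cosProd_nonneg {k r : ℝ} (hk : 0 < k) (hkr : k * r = π / 2) {c y : E}
    (hy : y ∈ cube c r) : 0 ≤ cosProd k c y := by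
  refine Finset.prod_nonneg fun j _ => cos_nonneg_of_mem_Icc ?_
  have := mul_le_mul_of_nonneg_left (hy j) hk.le
  rw [mem_Icc, ← abs_le, abs_mul, abs_of_pos hk]
  linarith

lemma cube_mem_nhds_of_cosProd_pos {k r : ℝ} (hkr : k * r = π / 2) {c y : E}
    (hy : y ∈ cube c r) (hpos : 0 < cosProd k c y) : cube c r ∈ 𝓝 y := by
  refine cube_mem_nhds fun j => (hy j).lt_of_ne fun hj => hpos.ne' ?_
  refine Finset.prod_eq_zero (Finset.mem_univ j) ?_
  rcases (abs_eq ((abs_nonneg _).trans (hy j))).1 hj with h | h <;> simp [h, hkr]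

lemma exists_pos_mul_sq_le {b : ℝ} (hb : 0 < b) : ∃ k : ℝ, 0 < k ∧ n * k ^ 2 ≤ b := by
  refine ⟨√(b / (n + 1)), by positivity, ?_⟩
  rw [sq_sqrt (by positivity), mul_div_assoc']
  exact div_le_of_le_mul₀ (by positivity) hb.le (by nlinarith)

lemma gaussian_eq_prod (α : ℝ) (c y : E) :
    gaussian α c y = ∏ j, exp (-(α * (y j - c j) ^ 2)) := by
  rw [gaussian, ← exp_sum, EuclideanSpace.real_norm_sq_eq, Finset.mul_sum,
    ← Finset.sum_neg_distrib]
  simp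

lemma contDiff_gaussian (α : ℝ) (c : E) : ContDiff ℝ 2 (gaussian α c) := by
  rw [funext (gaussian_eq_prod α c)]
  exact contDiff_prod_comp_sub (f := fun t => exp (-(α * t ^ 2))) (by fun_prop) c

lemma lap_gaussian (α : ℝ) (c x : E) :
    lap (gaussian α c) x = (4 * α ^ 2 * ‖x - c‖ ^ 2 - 2 * α * n) * gaussian α c x := by
  rw [funext (gaussian_eq_prod α c), lap_prod_comp_sub (f := fun t => exp (-(α * t ^ 2)))
    (by fun_prop) (deriv_deriv_exp_neg_mul_sq α) c x, EuclideanSpace.real_norm_sq_eq]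
  simp [Finset.sum_sub_distrib, Finset.mul_sum, mul_comm]

lemma lap_gaussian_pos {α : ℝ} (hα : 0 < α) {c y : E} (hy : n < 2 * α * ‖y - c‖ ^ 2) :
    0 < lap (gaussian α c) y := by
  rw [lap_gaussian]
  exact mul_pos (by nlinarith) (exp_pos _)

lemma gaussian_le_one {α : ℝ} (hα : 0 ≤ α) (c y : E) : gaussian α c y ≤ 1 :=
  exp_le_one_iff.2 (neg_nonpos.2 (by positivity))

lemma gaussian_eq_of_dist_eq {α ρ : ℝ} {c y : E} (hy : dist y c = ρ) :
    gaussian α c y = exp (-(α * ρ ^ 2)) := by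
  rw [gaussian, ← dist_eq_norm, hy]

lemma le_of_lap_le_neg {u : E → ℝ} (hu : ContDiff ℝ 2 u) {m θ c : ℝ} (hc : 0 < c)
    (hm : ∀ x, m ≤ u x) (hlap : ∀ x, u x < θ → lap u x ≤ -c) (x0 : E) : θ ≤ u x0 := by
  by_contra! hx0
  have hA : 0 < θ - m := by linarith [hm x0]
  obtain ⟨k, hk, hnk⟩ := exists_pos_mul_sq_le (n := n) (div_pos hc (mul_pos two_pos hA))
  have hkr : k * (π / (2 * k)) = π / 2 := by field_simp
  set K := cube x0 (π / (2 * k))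
  set φ := cosProd k x0
  set p : E → ℝ := fun y => u y - (θ - m) * φ y
  have hp : ContDiff ℝ 2 p := hu.sub (contDiff_const.mul (contDiff_cosProd k x0))
  have hx0K : x0 ∈ K := self_mem_cube x0 (by positivity)
  obtain ⟨y, hyK, hmin⟩ :=
    (isCompact_cube x0 _).exists_isMinOn ⟨x0, hx0K⟩ hp.continuous.continuousOn
  have hpy : p y < m := (hmin hx0K).trans_lt (by simp [p, φ, cosProd_self]; linarith)
  rcases (cosProd_nonneg hk hkr hyK).lt_or_eq with hpos | hzero
  · have h0 := lap_nonneg_of_isLocalMin hp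
      (hmin.isLocalMin (cube_mem_nhds_of_cosProd_pos hkr hyK hpos))
    rw [lap_sub_const_mul hu (contDiff_cosProd k x0), lap_cosProd] at h0
    have hφ := cosProd_le_one k x0 y
    have huy : u y < θ := by
      simp only [p] at hpy
      nlinarith
    have : (θ - m) * (n * k ^ 2) ≤ c / 2 := by
      rw [le_div_iff₀ (mul_pos two_pos hA)] at hnk
      nlinarith
    nlinarith [hlap y huy]
  · have : p y = u y := by simp [p, φ, ← hzero]
    linarith [hm y]

lemma lt_of_lap_le_neg_mul {u : E → ℝ} (hu : ContDiff ℝ 2 u) (hpos : ∀ x, 0 < u x) {a δ : ℝ}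
    (ha : 0 < a) (hlap : ∀ x, u x ≤ δ → lap u x ≤ -(a * u x)) (x1 : E) : δ < u x1 := by
  by_contra! hx1
  obtain ⟨k, hk, hnk⟩ := exists_pos_mul_sq_le (n := n) (half_pos ha)
  have hkr : k * (π / (2 * k)) = π / 2 := by field_simp
  have hx1K : x1 ∈ cube x1 (π / (2 * k)) := self_mem_cube x1 (by positivity)
  obtain ⟨s, hs0, hsu, y, hyK, hy⟩ := exists_touching (isCompact_cube x1 _)
    hu.continuous.continuousOn (contDiff_cosProd k x1).continuous.continuousOn
    (fun x _ => (hpos x).le) (fun x _ => cosProd_le_one k x1 x) hx1K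
    (by rw [cosProd_self]; exact one_pos)
  have hφy : 0 < cosProd k x1 y := pos_of_mul_pos_right (hy ▸ hpos y) hs0
  have hw : ContDiff ℝ 2 fun z => u z - s * cosProd k x1 z :=
    hu.sub (contDiff_const.mul (contDiff_cosProd k x1))
  have hmin : IsMinOn (fun z => u z - s * cosProd k x1 z) (cube x1 (π / (2 * k))) y :=
    fun z hz => show u y - s * cosProd k x1 y ≤ u z - s * cosProd k x1 z by linarith [hsu z hz]
  have h0 := lap_nonneg_of_isLocalMin hw
    (hmin.isLocalMin (cube_mem_nhds_of_cosProd_pos hkr hyK hφy))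
  have huy : u y ≤ δ := by
    have := hsu x1 hx1K
    rw [cosProd_self, mul_one] at this
    nlinarith [cosProd_le_one k x1 y]
  rw [lap_sub_const_mul hu (contDiff_cosProd k x1), lap_cosProd] at h0
  nlinarith [hlap y huy, hpos y]

/-- `ε (G - G|_{|y - c| = d})` is strictly subharmonic on the annulus because `α d² > 2n`, and lies
below `u` on both boundary spheres. -/
lemma gaussian_barrier_le {u : E → ℝ} (hu : ContDiff ℝ 2 u) (hnn : ∀ x, 0 ≤ u x)
    (hlap : ∀ x, lap u x ≤ 0) {c : E} {d ε α : ℝ} (hd : 0 < d) (hε : 0 < ε)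
    (hα : 2 * n < α * d ^ 2) (hinner : ∀ y, dist y c ≤ d / 2 → ε ≤ u y) :
    ∀ y ∈ closedBall c d \ ball c (d / 2),
      ε * (gaussian α c y - exp (-(α * d ^ 2))) ≤ u y := by
  have hα0 : 0 < α :=
    pos_of_mul_pos_left ((by positivity : (0:ℝ) ≤ 2 * n).trans_lt hα) (by positivity)
  have hw : ContDiff ℝ 2 fun x => u x - ε * gaussian α c x :=
    hu.sub (contDiff_const.mul (contDiff_gaussian α c))
  intro y hy
  obtain ⟨ym, hym, hmin⟩ := ((isCompact_closedBall c d).diff isOpen_ball).exists_isMinOn ⟨y, hy⟩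
    hw.continuous.continuousOn
  suffices -(ε * exp (-(α * d ^ 2))) ≤ u ym - ε * gaussian α c ym by
    have : u ym - ε * gaussian α c ym ≤ u y - ε * gaussian α c y := hmin hy
    linarith
  by_cases hin : dist ym c ≤ d / 2
  · nlinarith [hinner ym hin, gaussian_le_one hα0.le c ym, exp_pos (-(α * d ^ 2))]
  by_cases hout : d ≤ dist ym c
  · rw [gaussian_eq_of_dist_eq (le_antisymm (mem_closedBall.1 hym.1) hout)]
    linarith [hnn ym]
  rw [not_le] at hin hout
  have hnhds : closedBall c d \ ball c (d / 2) ∈ 𝓝 ym :=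
    mem_of_superset ((isOpen_ball.sdiff isClosed_closedBall).mem_nhds ⟨hout, by simpa using hin⟩)
      (sdiff_subset_sdiff ball_subset_closedBall ball_subset_closedBall)
  have h0 := lap_nonneg_of_isLocalMin hw (hmin.isLocalMin hnhds)
  rw [lap_sub_const_mul hu (contDiff_gaussian α c)] at h0
  have hG := lap_gaussian_pos hα0 (c := c) (y := ym) (by
    rw [← dist_eq_norm]
    nlinarith [mul_lt_mul_of_pos_left (pow_lt_pow_left₀ hin (by positivity) two_ne_zero) hα0])
  nlinarith [hlap ym]

lemma dist_add_smul_sub_eq {c z : E} (t : ℝ) :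
    dist (z + t • (c - z)) c = |1 - t| * dist z c := by
  rw [dist_eq_norm, dist_eq_norm, show z + t • (c - z) - c = (1 - t) • (z - c) by module,
    norm_smul, Real.norm_eq_abs]

/-- Hopf's lemma, with the barrier of `gaussian_barrier_le` restricted to the segment from `z`
towards the centre. -/
lemma pos_of_pos_on_ball {u : E → ℝ} (hu : ContDiff ℝ 2 u) (hnn : ∀ x, 0 ≤ u x)
    (hlap : ∀ x, lap u x ≤ 0) {c : E} {d : ℝ} (hd : 0 < d) (hpos : ∀ y, dist y c < d → 0 < u y)
    {z : E} (hz : dist z c = d) : 0 < u z := by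
  refine (hnn z).lt_of_ne' fun hz0 => ?_
  obtain ⟨y0, hy0, hmin0⟩ := (isCompact_closedBall c (d / 2)).exists_isMinOn
    ⟨c, mem_closedBall_self (by positivity)⟩ hu.continuous.continuousOn
  have hε : 0 < u y0 := hpos y0 (by linarith [mem_closedBall.1 hy0])
  set α := (2 * n + 1) / d ^ 2
  have hαd : α * d ^ 2 = 2 * n + 1 := div_mul_cancel₀ _ (by positivity)
  have hbar := gaussian_barrier_le hu hnn hlap hd hε (α := α) (by linarith)
    fun y hy => hmin0 (mem_closedBall.2 hy)
  set F : ℝ → ℝ := fun t =>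
    u (z + t • (c - z)) - u y0 * (exp (-(α * ((1 - t) * d) ^ 2)) - exp (-(α * d ^ 2)))
  have hF : ∀ t ∈ Ioo (0 : ℝ) (1 / 2), F 0 ≤ F t := by
    intro t ht
    have hdist : dist (z + t • (c - z)) c = (1 - t) * d := by
      rw [dist_add_smul_sub_eq, hz, abs_of_pos (by linarith [ht.2])]
    have hmem : z + t • (c - z) ∈ closedBall c d \ ball c (d / 2) :=
      ⟨mem_closedBall.2 (by nlinarith [ht.1]), by simp only [mem_ball, not_lt]; nlinarith [ht.2]⟩
    have := hbar _ hmem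
    rw [gaussian_eq_of_dist_eq hdist] at this
    simp only [F, zero_smul, add_zero, hz0, sub_zero, one_mul, sub_self, mul_zero]
    linarith
  have hu' : HasDerivAt (fun t : ℝ => u (z + t • (c - z))) 0 0 := by
    have hD := hasDerivAt_comp_line (hu.differentiable two_ne_zero) z (c - z) 0
    have hmin : IsLocalMin (fun t : ℝ => u (z + t • (c - z))) 0 :=
      .of_forall fun t => by simpa [hz0] using hnn _
    rwa [hmin.hasDerivAt_eq_zero hD] at hD
  have hg' : HasDerivAt (fun t : ℝ => exp (-(α * ((1 - t) * d) ^ 2)))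
      (exp (-(α * d ^ 2)) * (2 * α * d ^ 2)) 0 :=
    (((((hasDerivAt_id' 0).const_sub 1).mul_const d).pow 2).const_mul α).fun_neg.exp.congr_deriv
      (by simp; ring)
  have hF' : HasDerivAt F (-(u y0 * (exp (-(α * d ^ 2)) * (2 * α * d ^ 2)))) 0 :=
    (hu'.fun_sub ((hg'.sub_const _).const_mul _)).congr_deriv (by ring)
  have := hF'.nonneg_of_eventually_ge_right (eventually_of_mem (Ioo_mem_nhdsGT one_half_pos) hF)
  have : 0 < u y0 * (exp (-(α * d ^ 2)) * (2 * α * d ^ 2)) := by positivity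
  linarith

/-- A zero `z` of `u` nearest to `x2` would contradict Hopf's lemma on the ball of radius
`|z - x2|` about `x2`. -/
lemma pos_of_lap_nonpos {u : E → ℝ} (hu : ContDiff ℝ 2 u) (hnn : ∀ x, 0 ≤ u x)
    (hlap : ∀ x, lap u x ≤ 0) {x2 : E} (hx2 : 0 < u x2) (x : E) : 0 < u x := by
  by_contra! hx
  obtain ⟨z, hz0, hzd⟩ := (isClosed_singleton.preimage hu.continuous).exists_infDist_eq_dist
    ⟨x, le_antisymm hx (hnn x)⟩ x2
  have hd : 0 < dist z x2 := dist_pos.2 fun h => by simp [h, hx2.ne'] at hz0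
  refine (pos_of_pos_on_ball hu hnn hlap hd (fun y hy => (hnn y).lt_of_ne' fun hy0 => ?_)
    rfl).ne' hz0
  have := infDist_le_dist_of_mem (x := x2) (show y ∈ u ⁻¹' {0} from hy0)
  rw [hzd, dist_comm x2, dist_comm x2] at this
  linarith

lemma eq_of_deriv_neg {W : ℝ → ℝ} (hW : Continuous (deriv W)) {u : E → ℝ}
    (hu : ContDiff ℝ 2 u) (heq : ∀ x, lap u x = deriv W (u x)) {m μ : ℝ} (hm : ∀ x, m ≤ u x)
    (hμ : ∀ x, u x ≤ μ) (hneg : ∀ t ∈ Ico m μ, deriv W t < 0) (x : E) : u x = μ := by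
  refine le_antisymm (hμ x) (le_of_forall_lt_imp_le_of_dense fun θ hθ => ?_)
  rcases le_or_gt θ m with hθm | hmθ
  · exact hθm.trans (hm x)
  obtain ⟨c, hc, hWc⟩ := isCompact_Icc.exists_forall_le' (f := fun t => -deriv W t)
    hW.neg.continuousOn (a := 0) fun t ht => neg_pos.2 (hneg t ⟨ht.1, ht.2.trans_lt hθ⟩)
  exact le_of_lap_le_neg hu hc hm
    (fun y hy => (heq y).trans_le (by linarith [hWc (u y) ⟨hm y, hy.le⟩])) x

end MaximumPrinciple

open MaximumPrinciple in
theorem stmt9_general (n : ℕ) (W : ℝ → ℝ) (μ : ℝ)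
    (hW : CondA' W μ)
    (hW0 : deriv W 0 = 0 → deriv (deriv W) 0 < 0)
    (hW' : ∀ t ∈ Set.Ioo (0:ℝ) μ, deriv W t < 0)
    (u : EuclideanSpace ℝ (Fin n) → ℝ) (hu : ContDiff ℝ 2 u)
    (heq : ∀ x, lap u x = deriv W (u x))
    (hbd : ∀ x, 0 ≤ u x ∧ u x ≤ μ) :
    (∀ x, u x = 0) ∨ (∀ x, u x = μ) := by
  obtain ⟨hW2, hμ, -⟩ := hW
  have hW'c : Continuous (deriv W) := hW2.continuous_deriv one_le_two
  have hW'nonpos : ∀ t ∈ Icc 0 μ, deriv W t ≤ 0 := fun t ht =>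
    le_on_closure (fun s hs => (hW' s hs).le) hW'c.continuousOn continuousOn_const
      (by rwa [closure_Ioo hμ.ne])
  rcases (hW'nonpos 0 ⟨le_rfl, hμ.le⟩).lt_or_eq with hneg | hzero
  · refine Or.inr (eq_of_deriv_neg hW'c hu heq (fun x => (hbd x).1) (fun x => (hbd x).2) ?_)
    exact fun t ht => ht.1.eq_or_lt.elim (· ▸ hneg) fun h => hW' t ⟨h, ht.2⟩
  by_cases hu0 : ∀ x, u x = 0
  · exact Or.inl hu0
  obtain ⟨x2, hx2⟩ := not_forall.1 hu0
  have hpos := pos_of_lap_nonpos hu (fun x => (hbd x).1)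
    (fun x => (heq x).trans_le (hW'nonpos _ (hbd x))) ((hbd x2).1.lt_of_ne' hx2)
  obtain ⟨δ, hδ, hWδ⟩ := exists_forall_le_mul_of_hasDerivAt
    (hW2.differentiable_deriv_two 0).hasDerivAt hzero (hW0 hzero)
  have hδu := lt_of_lap_le_neg_mul hu hpos (a := -deriv (deriv W) 0 / 2) (by linarith [hW0 hzero])
    fun x hx => (heq x).trans_le (by linarith [hWδ (u x) ⟨(hpos x).le, hx⟩])
  exact Or.inr (eq_of_deriv_neg hW'c hu heq (fun x => (hδu x).le) (fun x => (hbd x).2)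
    fun t ht => hW' t ⟨hδ.trans_le ht.1, ht.2⟩)

theorem stmt9 (n : ℕ) (hn : 1 ≤ n) (W : ℝ → ℝ) (μ : ℝ)
    (hW3 : ContDiff ℝ 3 W) (hW : CondA' W μ)
    (hW0 : deriv W 0 = 0 → deriv (deriv W) 0 < 0)
    (hW' : ∀ t ∈ Set.Ioo (0:ℝ) μ, deriv W t < 0)
    (u : EuclideanSpace ℝ (Fin n) → ℝ) (hu : ContDiff ℝ 2 u)
    (heq : ∀ x, lap u x = deriv W (u x))
    (hbd : ∀ x, 0 ≤ u x ∧ u x ≤ μ) :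
    (∀ x, u x = 0) ∨ (∀ x, u x = μ) :=
  stmt9_general n W μ hW hW0 hW' u hu heq hbd
end
end

section
/- Suppose W ∈ C^{1,1}(ℝ) (W is C¹ with Lipschitz derivative), W(t) ≥ 0 for all t ∈ ℝ, W(μ) = 0, and W(t) > 0 for all t ∈ (μ_−, μ), where μ_− < μ. If u ∈ C²(ℝⁿ) satisfies Δu = W'(u) on ℝⁿ, μ_− ≤ u(x) ≤ μ for all x ∈ ℝⁿ, and u(x₁, x') → μ uniformly in x' ∈ ℝ^{n−1} both as x₁ → +∞ and as x₁ → −∞, then u ≡ μ on ℝⁿ. -/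
/-!
Let `m = inf u` and suppose `m < μ`. Since `u` is close to `μ` outside a slab `|x₁| ≤ M`, a
one-dimensional barrier `φ(x₁)` only has to be compared with `u` inside the slab, where the
penalised difference `u - φ(x₁) + ε ‖x - a‖²` attains its minimum; there `φ'' ≤ Δu + 2nε`.

If `W(m) = 0`, then `W'(m) = 0`, so `W'(t) ≤ L (t - m)` above `m`, and the barrier
`m + c cosh(√(L + 1) x₁)`, capped outside the slab, is forced below `u`.

If `W(m) > 0`, tilting `W` into `V(t) = W(t) + κ t` with a small `κ > 0` produces a minimum of `V`
at some `β ∈ (m, μ)`, strict on `[a, β)` for some `a < m`. Inverting the travel time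
`∫ ds / √(2 (V(s) - V(β)))` gives a front `ψ` with `ψ'' = W'(ψ) + κ` running from `β` (reached only
at `-∞`, as `V'(β) = 0`) down below `m`. Being a strict subsolution, it can be slid in `x₁` under
`u` by steps of a fixed size, hence through every position, which forces `u ≥ (m + β) / 2`.

In both cases `u` stays above a constant larger than `m`, a contradiction.
-/

open Metric Set Filter Pointwise

noncomputable section

open scoped Topology NNReal

theorem IsLocalMin.nonneg_of_hasDerivAt_of_hasDerivAt {g g' : ℝ → ℝ} {x c : ℝ}
    (hmin : IsLocalMin g x) (hg : ∀ᶠ t in 𝓝 x, HasDerivAt g (g' t) t)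
    (hg' : HasDerivAt g' c x) : 0 ≤ c := by
  by_contra! hc
  have hx : g' x = 0 := hmin.hasDerivAt_eq_zero hg.self_of_nhds
  have hright : ∀ᶠ t in 𝓝[>] x, g' t < 0 ∧ HasDerivAt g (g' t) t ∧ g x ≤ g t := by
    have hslope := (hasDerivAt_iff_tendsto_slope.1 hg').eventually (eventually_lt_nhds hc)
    filter_upwards [nhdsGT_le_nhdsNE x hslope, nhdsWithin_le_nhds (hg.and hmin),
      self_mem_nhdsWithin] with t hs ht (hxt : x < t)
    rw [slope_def_field, hx, sub_zero, div_neg_iff] at hs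
    exact ⟨hs.resolve_left (fun h => h.2.not_gt (sub_pos.2 hxt)) |>.1, ht⟩
  obtain ⟨b, hxb, hb⟩ := mem_nhdsGT_iff_exists_Ioo_subset.1 hright
  obtain ⟨t, hxt, htb⟩ := exists_between (mem_Ioi.1 hxb)
  have hcont : ContinuousOn g (Icc x t) := fun s hs =>
    (hs.1.eq_or_lt.elim (fun h => h ▸ hg.self_of_nhds)
      fun h => (hb ⟨h, hs.2.trans_lt htb⟩).2.1).continuousAt.continuousWithinAt
  obtain ⟨ξ, hξ, hslope⟩ := exists_hasDerivAt_eq_slope g g' hxt hcont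
    fun s hs => (hb ⟨hs.1, hs.2.trans htb⟩).2.1
  have hξneg := (hb ⟨hξ.1, hξ.2.trans htb⟩).1
  rw [hslope, div_neg_iff] at hξneg
  have hgt : g x ≤ g t := (hb ⟨hxt, htb⟩).2.2
  rcases hξneg with h | h <;> linarith [h.1, h.2]

section Line

variable {E F : Type*} [NormedAddCommGroup E] [NormedSpace ℝ E] [NormedAddCommGroup F]
  [NormedSpace ℝ F]

theorem DifferentiableAt.hasDerivAt_comp_add_smul {f : E → F} {q v : E} {t : ℝ}
    (hf : DifferentiableAt ℝ f (q + t • v)) :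
    HasDerivAt (fun s : ℝ => f (q + s • v)) (fderiv ℝ f (q + t • v) v) t := by
  have hline : HasDerivAt (fun s : ℝ => q + s • v) v t := by
    simpa using ((hasDerivAt_id t).smul_const v).const_add q
  exact hf.hasFDerivAt.comp_hasDerivAt t hline

theorem ContDiff.hasDerivAt_fderiv_apply_add_smul {u : E → ℝ} (hu : ContDiff ℝ 2 u) (q v : E) :
    HasDerivAt (fun s : ℝ => fderiv ℝ u (q + s • v) v)
      (fderiv ℝ (fun y => fderiv ℝ u y v) q v) 0 := by
  have hd : Differentiable ℝ (fun y => fderiv ℝ u y v) :=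
    ((hu.fderiv_right (by norm_num)).differentiable one_ne_zero).clm_apply
      (differentiable_const v)
  simpa using (hd (q + (0 : ℝ) • v)).hasDerivAt_comp_add_smul

end Line

theorem sub_le_mul_sq_of_lipschitzWith_deriv {f f' : ℝ → ℝ} (hf : ∀ t, HasDerivAt f (f' t) t)
    {L : ℝ≥0} (hL : LipschitzWith L f') {b : ℝ} (hb : f' b = 0) (t : ℝ) :
    f t - f b ≤ L / 2 * (t - b) ^ 2 := by
  set g : ℝ → ℝ := fun s => f s - L / 2 * (s - b) ^ 2
  have hg (s : ℝ) : HasDerivAt g (f' s - L * (s - b)) s := by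
    refine ((hf s).sub ((((hasDerivAt_id s).sub_const b).pow 2).const_mul _)).congr_deriv ?_
    simp only [Nat.cast_ofNat, id_eq, Nat.add_one_sub_one, pow_one, mul_one, sub_right_inj]
    ring
  have hlip (s : ℝ) : |f' s| ≤ L * |s - b| := by
    simpa [Real.dist_eq, hb] using hL.dist_le_mul s b
  have hmax : IsMaxOn g univ b := by
    refine isMaxOn_univ_of_deriv (hg b).continuousAt
      (fun s _ => (hg s).differentiableAt.differentiableWithinAt)
      (fun s _ => (hg s).differentiableAt.differentiableWithinAt) (fun s hs => ?_) (fun s hs => ?_)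
    · rw [(hg s).deriv]
      have := hlip s
      rw [abs_of_neg (sub_neg.2 hs)] at this
      linarith [neg_abs_le (f' s)]
    · rw [(hg s).deriv]
      have := hlip s
      rw [abs_of_pos (sub_pos.2 hs)] at this
      linarith [le_abs_self (f' s)]
  have := hmax (mem_univ t)
  simp only [mem_ofPred_eq, g, sub_self] at this
  linarith

theorem exists_isMinOn_Icc_forall_lt {V : ℝ → ℝ} (hV : Continuous V) {a b : ℝ} (hab : a ≤ b) :
    ∃ β ∈ Icc a b, IsMinOn V (Icc a b) β ∧ ∀ t ∈ Ico a β, V β < V t := by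
  obtain ⟨t₀, ht₀, hmin⟩ := isCompact_Icc.exists_isMinOn (nonempty_Icc.2 hab) hV.continuousOn
  -- the least minimiser
  obtain ⟨β, ⟨hβ, hVβ⟩, hleast⟩ := (isCompact_Icc.inter_right
    (isClosed_singleton.preimage hV)).exists_isLeast ⟨t₀, ht₀, rfl⟩
  replace hVβ : V β = V t₀ := hVβ
  have hβmin : IsMinOn V (Icc a b) β := fun t ht => hVβ ▸ hmin ht
  refine ⟨β, hβ, hβmin, fun t ht => (hβmin ⟨ht.1, ht.2.le.trans hβ.2⟩).lt_of_ne fun h => ?_⟩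
  exact ht.2.not_ge (hleast ⟨⟨ht.1, ht.2.le.trans hβ.2⟩, (h.symm.trans hVβ : V t = V t₀)⟩)

theorem deriv_eq_zero_of_forall_nonneg {f : ℝ → ℝ} (hf : ∀ t, 0 ≤ f t) {x : ℝ} (hx : f x = 0) :
    deriv f x = 0 :=
  (IsMinOn.isLocalMin (s := univ) (fun t _ => hx ▸ hf t) univ_mem).deriv_eq_zero

theorem exists_lt_of_hasDerivAt_pos {f : ℝ → ℝ} {f' a b : ℝ} (hf : HasDerivAt f f' b)
    (hf' : 0 < f') (hab : a < b) : ∃ t ∈ Ioo a b, f t < f b := by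
  have hslope := (hasDerivAt_iff_tendsto_slope.1 hf).eventually (lt_mem_nhds hf')
  obtain ⟨t, hs, ht⟩ :=
    ((hslope.filter_mono (nhdsLT_le_nhdsNE b)).and (Ioo_mem_nhdsLT hab)).exists
  rw [slope_def_field, lt_div_iff_of_neg (sub_neg.2 ht.2)] at hs
  exact ⟨t, ht, by linarith⟩

theorem exists_tilted_strict_min {W : ℝ → ℝ} (hW : Differentiable ℝ W) (hWnn : ∀ t, 0 ≤ W t)
    {m μ : ℝ} (hmμ : m < μ) (hWμ : W μ = 0) (hWm : 0 < W m) :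
    ∃ κ > 0, ∃ a < m, ∃ β ∈ Ioo m μ,
      deriv W β + κ = 0 ∧ ∀ t ∈ Ico a β, W β + κ * β < W t + κ * t := by
  obtain ⟨a, ham, ha⟩ : ∃ a < m, ∀ t ∈ Icc a m, W m / 2 < W t := by
    obtain ⟨l, r, ⟨hl, hr⟩, hsub⟩ := mem_nhds_iff_exists_Ioo_subset.1
      (hW.continuous.continuousAt.eventually (lt_mem_nhds (half_lt_self hWm)))
    exact ⟨(l + m) / 2, by linarith, fun t ht => hsub ⟨by linarith [ht.1], by linarith [ht.2]⟩⟩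
  -- tilting `W` by `κ t` makes every value on `[a, m]` exceed the value at `μ`
  set κ := W m / (2 * (μ - a))
  have hκ : 0 < κ := div_pos hWm (by linarith)
  have hκμ : κ * (μ - a) = W m / 2 := by
    simp only [κ]
    field_simp [(sub_pos.2 (ham.trans hmμ)).ne']
  set V : ℝ → ℝ := fun t => W t + κ * t
  have hV (t : ℝ) : HasDerivAt V (deriv W t + κ) t :=
    ((hW t).hasDerivAt.add ((hasDerivAt_id t).const_mul κ)).congr_deriv (by simp)
  have hVμ : ∀ t ∈ Icc a m, V μ < V t := fun t ht => by
    simp only [V, hWμ]; nlinarith [ha t ht, ht.1]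
  obtain ⟨β, hβ, hβmin, hβlt⟩ := exists_isMinOn_Icc_forall_lt
    (continuous_iff_continuousAt.2 fun t => (hV t).continuousAt)
    (ham.trans hmμ).le
  have hmβ : m < β := by
    by_contra! h
    exact (hVμ β ⟨hβ.1, h⟩).not_ge (hβmin ⟨(ham.trans hmμ).le, le_rfl⟩)
  have hβμ : β < μ := by
    refine hβ.2.lt_of_ne fun h => ?_
    obtain ⟨t, ht, hVt⟩ := exists_lt_of_hasDerivAt_pos (hV μ)
      (by linarith [deriv_eq_zero_of_forall_nonneg hWnn hWμ]) (ham.trans hmμ)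
    exact hVt.not_ge (h ▸ hβmin ⟨ht.1.le, ht.2.le⟩)
  refine ⟨κ, hκ, a, ham, β, ⟨hmβ, hβμ⟩, ?_, hβlt⟩
  exact (hβmin.isLocalMin (Icc_mem_nhds (ham.trans hmβ) hβμ)).hasDerivAt_eq_zero (hV β)

theorem mul_log_le_integral_inv_sqrt {V : ℝ → ℝ} (hV : Continuous V) {b β K t : ℝ} (hK : 0 ≤ K)
    (hmin : ∀ s ∈ Ico b β, V β < V s) (hquad : ∀ s ∈ Ico b β, V s - V β ≤ K * (β - s) ^ 2)
    (ht : t ∈ Ioo b β) :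
    (√(2 * K))⁻¹ * Real.log ((β - b) / (β - t)) ≤ ∫ s in b..t, (√(2 * (V s - V β)))⁻¹ := by
  set c := √(2 * K)
  have hsub : uIcc b t ⊆ Ico b β := by
    rw [uIcc_of_le ht.1.le]; exact Icc_subset_Ico_right ht.2
  calc c⁻¹ * Real.log ((β - b) / (β - t)) = ∫ s in b..t, c⁻¹ * (β - s)⁻¹ := by
        rw [intervalIntegral.integral_const_mul,
          intervalIntegral.integral_comp_sub_left (fun x => x⁻¹),
          integral_inv_of_pos (sub_pos.2 ht.2) (sub_pos.2 (ht.1.trans ht.2))]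
    _ ≤ ∫ s in b..t, (√(2 * (V s - V β)))⁻¹ := by
        refine intervalIntegral.integral_mono_on ht.1.le ?_ ?_ fun s hs => ?_
        · refine ContinuousOn.intervalIntegrable fun s hs => ?_
          exact (continuousAt_const.mul ((continuousAt_const.sub continuousAt_id).inv₀
            (sub_pos.2 (hsub hs).2).ne')).continuousWithinAt
        · refine ContinuousOn.intervalIntegrable fun s hs => ?_
          exact ((Real.continuous_sqrt.comp (by fun_prop)).continuousAt.inv₀
            (Real.sqrt_pos.2 (by linarith [hmin s (hsub hs)])).ne').continuousWithinAt
        · have hs' := hsub (Icc_subset_uIcc hs)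
          have hpos : 0 < √(2 * (V s - V β)) := Real.sqrt_pos.2 (by linarith [hmin s hs'])
          rw [← mul_inv]
          refine inv_anti₀ hpos ?_
          calc √(2 * (V s - V β)) ≤ √((c * (β - s)) ^ 2) := by
                refine Real.sqrt_le_sqrt ?_
                rw [mul_pow, Real.sq_sqrt (by linarith)]
                nlinarith [hquad s hs']
            _ = c * (β - s) := Real.sqrt_sq (mul_nonneg (Real.sqrt_nonneg _) (by linarith [hs'.2]))

theorem tendsto_integral_inv_sqrt_atTop {V : ℝ → ℝ} (hV : Continuous V) {b β K : ℝ} (hbβ : b < β)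
    (hmin : ∀ t ∈ Ico b β, V β < V t) (hquad : ∀ t ∈ Ico b β, V t - V β ≤ K * (β - t) ^ 2) :
    Tendsto (fun t => ∫ s in b..t, (√(2 * (V s - V β)))⁻¹) (𝓝[<] β) atTop := by
  have hK : 0 < K := by
    by_contra! hK
    nlinarith [hmin b ⟨le_rfl, hbβ⟩, hquad b ⟨le_rfl, hbβ⟩,
      mul_nonpos_of_nonpos_of_nonneg hK (sq_nonneg (β - b))]
  have hgap : Tendsto (fun t => β - t) (𝓝[<] β) (𝓝[>] 0) := by
    refine tendsto_nhdsWithin_iff.2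
      ⟨?_, eventually_nhdsWithin_of_forall fun t (ht : t < β) => sub_pos.2 ht⟩
    exact ((continuous_const.sub continuous_id).tendsto' β 0 (sub_self β)).mono_left
      nhdsWithin_le_nhds
  refine tendsto_atTop_mono' _ (mem_of_superset (Ioo_mem_nhdsLT hbβ)
    fun t ht => mul_log_le_integral_inv_sqrt hV hK.le hmin hquad ht) ?_
  simpa [div_eq_mul_inv] using (Real.tendsto_log_atTop.comp
    ((tendsto_inv_nhdsGT_zero.comp hgap).const_mul_atTop (sub_pos.2 hbβ))).const_mul_atTop
    (inv_pos.2 (Real.sqrt_pos.2 (by linarith : 0 < 2 * K)))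

theorem exists_hasDerivAt_leftInverse {G g : ℝ → ℝ} {a β : ℝ} (hab : a < β)
    (hG : ∀ t ∈ Ico a β, HasDerivAt G (g t) t) (hmono : StrictMonoOn G (Ico a β))
    (hg : ∀ t ∈ Ico a β, g t ≠ 0) (htop : Tendsto G (𝓝[<] β) atTop) :
    ∃ F : ℝ → ℝ, (∀ t ∈ Ico a β, F (G t) = t) ∧ StrictMonoOn F (Ioi (G a)) ∧
      ∀ y, G a < y → F y ∈ Ioo a β ∧ HasDerivAt F (g (F y))⁻¹ y := by
  have hGc : ContinuousOn G (Ico a β) := fun t ht => (hG t ht).continuousAt.continuousWithinAt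
  have hsurj : ∀ y, G a < y → ∃ t ∈ Ioo a β, G t = y := by
    intro y hy
    obtain ⟨t₂, hyt₂, ht₂⟩ := ((htop.eventually (eventually_gt_atTop y)).and
      (Ioo_mem_nhdsLT hab)).exists
    obtain ⟨t, ht, rfl⟩ := intermediate_value_Ioo ht₂.1.le
      (hGc.mono (Icc_subset_Ico_right ht₂.2)) ⟨hy, hyt₂⟩
    exact ⟨t, ⟨ht.1, ht.2.trans ht₂.2⟩, rfl⟩
  set F := Function.invFunOn G (Ico a β)
  have hFG : ∀ t ∈ Ico a β, F (G t) = t := hmono.injOn.leftInvOn_invFunOn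
  have hF : ∀ y, G a < y → F y ∈ Ioo a β ∧ G (F y) = y := by
    intro y hy
    obtain ⟨t, ht, rfl⟩ := hsurj y hy
    rw [hFG t (Ioo_subset_Ico_self ht)]
    exact ⟨ht, rfl⟩
  have hFmono : StrictMonoOn F (Ioi (G a)) := by
    intro y₁ hy₁ y₂ hy₂ hy
    by_contra! h
    have := hmono.monotoneOn (Ioo_subset_Ico_self (hF y₂ hy₂).1)
      (Ioo_subset_Ico_self (hF y₁ hy₁).1) h
    rw [(hF y₁ hy₁).2, (hF y₂ hy₂).2] at this
    exact hy.not_ge this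
  refine ⟨F, hFG, hFmono, fun y hy => ⟨(hF y hy).1, ?_⟩⟩
  have himage : F '' Ioi (G a) ∈ 𝓝 (F y) := by
    refine mem_of_superset (Ioo_mem_nhds (hF y hy).1.1 (hF y hy).1.2) fun t ht => ?_
    exact ⟨G t, hmono ⟨le_rfl, hab⟩ (Ioo_subset_Ico_self ht) ht.1, hFG t (Ioo_subset_Ico_self ht)⟩
  have hFy := Ioo_subset_Ico_self (hF y hy).1
  exact HasDerivAt.of_local_left_inverse
    (hFmono.continuousAt_of_image_mem_nhds (Ioi_mem_nhds hy) himage) (hG _ hFy) (hg _ hFy)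
    (eventually_of_mem (Ioi_mem_nhds hy) fun z hz => (hF z hz).2)

theorem hasDerivAt_neg_sqrt_of_hasDerivAt {V ψ : ℝ → ℝ} {c y : ℝ}
    (hV : DifferentiableAt ℝ V (ψ y)) (hψ : HasDerivAt ψ (-√(2 * (V (ψ y) - c))) y)
    (hc : c < V (ψ y)) :
    HasDerivAt (fun z => -√(2 * (V (ψ z) - c))) (deriv V (ψ y)) y := by
  have hpos : 0 < √(2 * (V (ψ y) - c)) := Real.sqrt_pos.2 (by linarith)
  have hVψ : HasDerivAt (fun z => V (ψ z)) (deriv V (ψ y) * -√(2 * (V (ψ y) - c))) y :=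
    hV.hasDerivAt.comp y hψ
  refine (((hVψ.sub_const c).const_mul 2).sqrt (by positivity)).neg.congr_deriv ?_
  field_simp

theorem exists_inverse_travelTime {V : ℝ → ℝ} (hV : Continuous V) {a b β K : ℝ} (hab : a < b)
    (hbβ : b < β) (hmin : ∀ t ∈ Ico a β, V β < V t)
    (hquad : ∀ t ∈ Ico b β, V t - V β ≤ K * (β - t) ^ 2) :
    ∃ F : ℝ → ℝ, F 0 = b ∧ MonotoneOn F (Ici 0) ∧ (∀ y, 0 ≤ y → F y ∈ Ico b β) ∧
      Ico b β ⊆ F '' Ici 0 ∧ ∀ y, 0 ≤ y → HasDerivAt F (√(2 * (V (F y) - V β))) y := by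
  -- `F` inverts the travel time `G t = ∫_b^t ds / √(2 (V s - V β))`
  set f₀ : ℝ → ℝ := fun s => (√(2 * (V s - V β)))⁻¹
  have hf₀ : ∀ t, V β < V t → 0 < f₀ t ∧ ContinuousAt f₀ t := fun t ht => by
    have hpos : 0 < √(2 * (V t - V β)) := Real.sqrt_pos.2 (by linarith)
    exact ⟨inv_pos.2 hpos, (Real.continuous_sqrt.comp (by fun_prop)).continuousAt.inv₀ hpos.ne'⟩
  set G : ℝ → ℝ := fun t => ∫ s in b..t, f₀ s
  have hb : b ∈ Ico a β := ⟨hab.le, hbβ⟩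
  have hG : ∀ t ∈ Ico a β, HasDerivAt G (f₀ t) t := by
    intro t ht
    have hsub : uIcc b t ⊆ Ico a β := ordConnected_Ico.uIcc_subset hb ht
    exact intervalIntegral.integral_hasDerivAt_right (ContinuousOn.intervalIntegrable
      fun s hs => (hf₀ s (hmin s (hsub hs))).2.continuousWithinAt)
      (ContinuousAt.stronglyMeasurableAtFilter (isOpen_lt continuous_const hV)
        (fun s hs => (hf₀ s hs).2) t (hmin t ht)) (hf₀ t (hmin t ht)).2
  have hGmono : StrictMonoOn G (Ico a β) := by
    refine strictMonoOn_of_deriv_pos (convex_Ico a β)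
      (fun t ht => (hG t ht).continuousAt.continuousWithinAt) fun t ht => ?_
    rw [interior_Ico] at ht
    rw [(hG t (Ioo_subset_Ico_self ht)).deriv]
    exact (hf₀ t (hmin t (Ioo_subset_Ico_self ht))).1
  obtain ⟨F, hFG, hFmono, hF⟩ := exists_hasDerivAt_leftInverse (hab.trans hbβ) hG hGmono
    (fun t ht => (hf₀ t (hmin t ht)).1.ne') (tendsto_integral_inv_sqrt_atTop hV hbβ
      (fun t ht => hmin t ⟨hab.le.trans ht.1, ht.2⟩) hquad)
  have hGb : G b = 0 := intervalIntegral.integral_same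
  have hGa : G a < 0 := hGb ▸ hGmono ⟨le_rfl, hab.trans hbβ⟩ hb hab
  have hF0 : F 0 = b := hGb ▸ hFG b hb
  have hFmono' : MonotoneOn F (Ici 0) :=
    hFmono.monotoneOn.mono fun y (hy : 0 ≤ y) => hGa.trans_le hy
  refine ⟨F, hF0, hFmono', fun y hy => ⟨hF0 ▸ hFmono' self_mem_Ici hy hy,
    (hF y (hGa.trans_le hy)).1.2⟩, fun t ht => ?_, fun y hy => ?_⟩
  · have ht' : t ∈ Ico a β := ⟨hab.le.trans ht.1, ht.2⟩
    exact ⟨G t, hGb ▸ hGmono.monotoneOn hb ht' ht.1, hFG t ht'⟩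
  · simpa [f₀] using (hF y (hGa.trans_le hy)).2

theorem exists_front {V : ℝ → ℝ} (hV : Differentiable ℝ V) {a b β K : ℝ} (hab : a < b)
    (hbβ : b < β) (hmin : ∀ t ∈ Ico a β, V β < V t)
    (hquad : ∀ t ∈ Ico b β, V t - V β ≤ K * (β - t) ^ 2) :
    ∃ (ψ ψ' : ℝ → ℝ) (P : ℝ≥0), LipschitzWith P ψ ∧ Antitone ψ ∧ ψ 0 = b ∧ (∀ y, ψ y < β) ∧
      Ico b β ⊆ range ψ ∧ (∀ y < 0, HasDerivAt ψ (ψ' y) y) ∧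
      ∀ y < 0, HasDerivAt ψ' (deriv V (ψ y)) y := by
  obtain ⟨F, hF0, hFmono, hFmem, hFrange, hF⟩ :=
    exists_inverse_travelTime hV.continuous hab hbβ hmin hquad
  have hVc := hV.continuous
  set ψ : ℝ → ℝ := fun y => F (max (-y) 0)
  set ψ' : ℝ → ℝ := fun y => -√(2 * (V (ψ y) - V β))
  have hψmem (y : ℝ) : ψ y ∈ Ico b β := hFmem _ (le_max_right _ _)
  have hψ' : ∀ y < 0, HasDerivAt ψ (ψ' y) y := by
    intro y hy
    have hev : ψ =ᶠ[𝓝 y] fun z => F (-z) := by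
      filter_upwards [Iio_mem_nhds hy] with z (hz : z < 0)
      simp [ψ, max_eq_left (neg_nonneg.2 hz.le)]
    refine (((hF (-y) (by linarith)).comp y (hasDerivAt_neg y)).congr_of_eventuallyEq
      hev).congr_deriv ?_
    simp [ψ', ψ, max_eq_left (neg_nonneg.2 hy.le)]
  obtain ⟨C, hC⟩ := isCompact_Icc.exists_bound_of_continuousOn (s := Icc b β)
    (f := fun t => √(2 * (V t - V β))) (by fun_prop)
  have hFlip : LipschitzOnWith C.toNNReal F (Ici 0) := by
    refine (convex_Ici 0).lipschitzOnWith_of_nnnorm_hasDerivWithin_le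
      (fun y (hy : 0 ≤ y) => (hF y hy).hasDerivWithinAt) fun y (hy : 0 ≤ y) => ?_
    rw [← NNReal.coe_le_coe, coe_nnnorm, Real.coe_toNNReal']
    exact (hC _ (Ico_subset_Icc_self (hFmem y hy))).trans (le_max_left _ _)
  have hclip : LipschitzWith 1 fun y : ℝ => max (-y) 0 := LipschitzWith.id.neg.max_const 0
  refine ⟨ψ, ψ', C.toNNReal * 1, lipschitzOnWith_univ.1 (hFlip.comp hclip.lipschitzOnWith
      fun y _ => le_max_right (-y) 0), fun y₁ y₂ h => ?_, by simp [ψ, hF0],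
    fun y => (hψmem y).2, fun t ht => ?_, hψ', fun y hy => ?_⟩
  · exact hFmono (mem_Ici.2 (le_max_right _ _)) (mem_Ici.2 (le_max_right _ _))
      (max_le_max (neg_le_neg h) le_rfl)
  · obtain ⟨y, hy, rfl⟩ := hFrange ht
    exact ⟨-y, by simp [ψ, max_eq_left (show (0 : ℝ) ≤ y from hy)]⟩
  · exact hasDerivAt_neg_sqrt_of_hasDerivAt (hV _) (hψ' y hy)
      (hmin _ ⟨hab.le.trans (hψmem y).1, (hψmem y).2⟩)

theorem exists_forall_add_norm_sub_sq_le {F : Type*} [NormedAddCommGroup F] [ProperSpace F]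
    {f : F → ℝ} (hf : Continuous f) (hbdd : BddBelow (range f)) (a : F) {ε : ℝ} (hε : 0 < ε) :
    ∃ q, ∀ x, f q + ε * ‖q - a‖ ^ 2 ≤ f x + ε * ‖x - a‖ ^ 2 := by
  obtain ⟨B, hB⟩ := hbdd
  have hnorm : Tendsto (fun x => ‖x - a‖) (cocompact F) atTop := by
    simpa [dist_eq_norm] using tendsto_dist_right_cocompact_atTop a
  exact (by fun_prop : Continuous fun x => f x + ε * ‖x - a‖ ^ 2).exists_forall_le
    (tendsto_atTop_add_left_of_le _ B (fun x => hB (mem_range_self x))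
      (((tendsto_pow_atTop two_ne_zero).comp hnorm).const_mul_atTop hε))

section Laplacian

variable {n : ℕ}

theorem sum_le_lap_of_isLocalMin_sub {u g : EuclideanSpace ℝ (Fin n) → ℝ}
    {q : EuclideanSpace ℝ (Fin n)} (hu : ContDiff ℝ 2 u) (hmin : IsLocalMin (fun x => u x - g x) q)
    {g' : Fin n → ℝ → ℝ} {c : Fin n → ℝ}
    (hg : ∀ i, ∀ᶠ t in 𝓝 0,
      HasDerivAt (fun s => g (q + s • EuclideanSpace.single i 1)) (g' i t) t)
    (hg' : ∀ i, HasDerivAt (g' i) (c i) 0) :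
    ∑ i, c i ≤ lap u q := by
  refine Finset.sum_le_sum fun i _ => ?_
  set e : EuclideanSpace ℝ (Fin n) := EuclideanSpace.single i 1
  have hline : IsLocalMin ((fun x => u x - g x) ∘ fun s : ℝ => q + s • e) 0 :=
    IsLocalMin.comp_continuous (b := 0) (by simpa using hmin) (by fun_prop)
  have hud : Differentiable ℝ u := hu.differentiable (by norm_num)
  have := hline.nonneg_of_hasDerivAt_of_hasDerivAt
    ((hg i).mono fun t ht => (hud _).hasDerivAt_comp_add_smul.sub ht)
    ((hu.hasDerivAt_fderiv_apply_add_smul q e).sub (hg' i))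
  linarith

theorem le_lap_add_of_isLocalMin {u : EuclideanSpace ℝ (Fin n) → ℝ} {φ φ' : ℝ → ℝ}
    {q a : EuclideanSpace ℝ (Fin n)} {i₀ : Fin n} {c ε : ℝ} (hu : ContDiff ℝ 2 u)
    (hφ : ∀ᶠ y in 𝓝 (q i₀), HasDerivAt φ (φ' y) y) (hφ' : HasDerivAt φ' c (q i₀))
    (hmin : IsLocalMin (fun x => u x - φ (x i₀) + ε * ‖x - a‖ ^ 2) q) :
    c ≤ lap u q + 2 * n * ε := by
  set e : Fin n → EuclideanSpace ℝ (Fin n) := fun i => EuclideanSpace.single i 1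
  -- `δ i = [i = i₀]`
  set δ : Fin n → ℝ := fun i => e i i₀
  have hcoord (i : Fin n) (s : ℝ) : (q + s • e i) i₀ = q i₀ + s * δ i := by simp [δ]
  have hline (i : Fin n) (t : ℝ) : HasDerivAt (fun s : ℝ => q + s • e i - a) (e i) t := by
    simpa using (((hasDerivAt_id t).smul_const (e i)).const_add q).sub_const a
  have hsum : ∑ i, (c * δ i * δ i - 2 * ε) = c - 2 * n * ε := by
    simp only [δ, e, PiLp.single_apply, mul_ite, mul_one, mul_zero, Finset.sum_sub_distrib,
      Finset.sum_ite_eq, Finset.mem_univ, ↓reduceIte, Finset.sum_const, Finset.card_univ,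
      Fintype.card_fin, nsmul_eq_mul, sub_right_inj]
    ring
  have key := sum_le_lap_of_isLocalMin_sub (g := fun x => φ (x i₀) - ε * ‖x - a‖ ^ 2)
    (g' := fun i t => φ' (q i₀ + t * δ i) * δ i - ε * (2 * inner ℝ (q + t • e i - a) (e i)))
    (c := fun i => c * δ i * δ i - 2 * ε) hu (by convert hmin using 2; ring)
    (fun i => ?_) (fun i => ?_)
  · linarith
  · have hpath : Tendsto (fun t : ℝ => q i₀ + t * δ i) (𝓝 0) (𝓝 (q i₀)) := by
      have : Continuous fun t : ℝ => q i₀ + t * δ i := by fun_prop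
      simpa using this.tendsto 0
    filter_upwards [hpath.eventually hφ] with t ht
    show HasDerivAt (fun s => φ ((q + s • e i) i₀) - ε * ‖q + s • e i - a‖ ^ 2) _ t
    simp only [hcoord]
    exact (ht.comp t ((hasDerivAt_mul_const (δ i)).const_add (q i₀))).sub
      ((hline i t).norm_sq.const_mul ε)
  · have hφ'0 : HasDerivAt φ' c (q i₀ + 0 * δ i) := by simpa using hφ'
    refine (((hφ'0.comp 0 ((hasDerivAt_mul_const (δ i)).const_add (q i₀))).mul_const (δ i)).sub
      ((((hline i 0).inner ℝ (hasDerivAt_const 0 (e i))).const_mul 2).const_mul ε)).congr_deriv ?_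
    simp only [e, zero_smul, add_zero, inner_zero_right, inner_self_eq_norm_sq_to_K,
      PiLp.norm_single, norm_one, Real.ringHom_apply, one_pow, zero_add, mul_one, sub_right_inj]
    ring

theorem exists_le_lap_add_of_barrier {u : EuclideanSpace ℝ (Fin n) → ℝ} (hu : ContDiff ℝ 2 u)
    (i₀ : Fin n) {φ φ' φ'' : ℝ → ℝ} {O : Set ℝ} (hO : IsOpen O) (hφ : Continuous φ)
    (hφ' : ∀ y ∈ O, HasDerivAt φ (φ' y) y) (hφ'' : ∀ y ∈ O, HasDerivAt φ' (φ'' y) y)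
    (hbdd : BddBelow (range fun x => u x - φ (x i₀))) (a : EuclideanSpace ℝ (Fin n))
    (hO_of_le : ∀ x, u x - φ (x i₀) ≤ u a - φ (a i₀) → x i₀ ∈ O) {ε : ℝ} (hε : 0 < ε) :
    ∃ q, u q - φ (q i₀) ≤ u a - φ (a i₀) ∧ q i₀ ∈ O ∧ φ'' (q i₀) ≤ lap u q + 2 * n * ε := by
  have hcont : Continuous fun x : EuclideanSpace ℝ (Fin n) => u x - φ (x i₀) :=
    hu.continuous.sub (hφ.comp (by fun_prop))
  obtain ⟨q, hq⟩ := exists_forall_add_norm_sub_sq_le hcont hbdd a hε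
  have hqa : u q - φ (q i₀) ≤ u a - φ (a i₀) := by
    have := hq a
    simp only [sub_self, norm_zero] at this
    nlinarith [sq_nonneg ‖q - a‖]
  have hqO := hO_of_le q hqa
  have hmin : IsMinOn (fun x => u x - φ (x i₀) + ε * ‖x - a‖ ^ 2) univ q := fun x _ => hq x
  refine ⟨q, hqa, hqO, le_lap_add_of_isLocalMin hu ?_ (hφ'' _ hqO) (hmin.isLocalMin univ_mem)⟩
  filter_upwards [hO.mem_nhds hqO] with y hy using hφ' y hy

theorem barrier_le_of_linear_bound {u : EuclideanSpace ℝ (Fin n) → ℝ} (hu : ContDiff ℝ 2 u)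
    {f : ℝ → ℝ} (heq : ∀ x, lap u x = f (u x)) (i₀ : Fin n) {K m : ℝ} (hK : 0 < K)
    (hf : ∀ t, m ≤ t → f t ≤ K * (t - m)) (hm : ∀ x, m ≤ u x) {φ φ' : ℝ → ℝ} {O : Set ℝ}
    (hO : IsOpen O) (hφ : Continuous φ) (hφB : BddAbove (range φ))
    (hφ' : ∀ y ∈ O, HasDerivAt φ (φ' y) y) (hφ'' : ∀ y ∈ O, HasDerivAt φ' (K * (φ y - m)) y)
    (hO_of_lt : ∀ x, u x < φ (x i₀) → x i₀ ∈ O) (a : EuclideanSpace ℝ (Fin n)) :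
    φ (a i₀) ≤ u a := by
  by_contra! ha
  obtain ⟨ε, hε, hεsmall⟩ := exists_pos_mul_lt (mul_pos hK (sub_pos.2 ha)) (2 * n)
  obtain ⟨B, hB⟩ := hφB
  have hbdd : BddBelow (range fun x => u x - φ (x i₀)) :=
    ⟨m - B, by rintro _ ⟨x, rfl⟩; linarith [hm x, hB (mem_range_self (x i₀))]⟩
  obtain ⟨q, hqa, hqO, hq⟩ := exists_le_lap_add_of_barrier hu i₀ hO hφ hφ' hφ'' hbdd a
    (fun x hx => hO_of_lt x (by linarith)) hε
  rw [heq] at hq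
  nlinarith [hf (u q) (hm q)]

theorem exists_gt_forall_le_of_lipschitzWith_of_eq_zero {u : EuclideanSpace ℝ (Fin n) → ℝ}
    (hu : ContDiff ℝ 2 u) {f : ℝ → ℝ} {L : ℝ≥0} (hf : LipschitzWith L f)
    (heq : ∀ x, lap u x = f (u x)) (i₀ : Fin n) {m μ : ℝ} (hm : ∀ x, m ≤ u x) (hmμ : m < μ)
    (hfm : f m = 0) (hslab : ∀ c < μ, ∃ M, ∀ x, M < |x i₀| → c ≤ u x) :
    ∃ θ > m, ∀ x, θ ≤ u x := by
  have hf' : ∀ t, m ≤ t → f t ≤ (L + 1) * (t - m) := fun t ht => by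
    have := hf.dist_le_mul t m
    rw [Real.dist_eq, Real.dist_eq, hfm, sub_zero, abs_of_nonneg (sub_nonneg.2 ht)] at this
    nlinarith [le_abs_self (f t)]
  obtain ⟨M, hM⟩ := hslab ((m + μ) / 2) (by linarith)
  set α := √(L + 1)
  have hαα : α * α = L + 1 := Real.mul_self_sqrt (by positivity)
  set c := (μ - m) / (4 * Real.cosh (α * M))
  have hc : 0 < c := div_pos (by linarith) (mul_pos four_pos (Real.cosh_pos _))
  have hcM : c * Real.cosh (α * M) = (μ - m) / 4 := by
    simp only [c]
    field_simp
  set b : ℝ → ℝ := fun y => m + c * Real.cosh (α * y)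
  have hb' (y : ℝ) : HasDerivAt b (c * (Real.sinh (α * y) * α)) y := by
    refine ((((Real.hasDerivAt_cosh _).comp y ((hasDerivAt_id y).const_mul α)).const_mul
      c).const_add m).congr_deriv ?_
    simp
  have hb'' (y : ℝ) :
      HasDerivAt (fun y => c * (Real.sinh (α * y) * α)) ((L + 1) * (b y - m)) y := by
    refine ((((Real.hasDerivAt_sinh _).comp y ((hasDerivAt_id y).const_mul α)).mul_const
      α).const_mul c).congr_deriv ?_
    simp only [b, id, ← hαα]
    ring
  set O : Set ℝ := {y | b y < (m + μ) / 2}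
  have hO : IsOpen O := isOpen_lt (by fun_prop) continuous_const
  have hφb : ∀ y ∈ O, (fun y => min (b y) ((m + μ) / 2)) =ᶠ[𝓝 y] b := fun y hy => by
    filter_upwards [hO.mem_nhds hy] with z hz using min_eq_left (le_of_lt hz)
  have hbelow := barrier_le_of_linear_bound hu heq i₀ (by positivity) hf' hm hO (by fun_prop)
    ⟨(m + μ) / 2, by rintro _ ⟨y, rfl⟩; exact min_le_right _ _⟩
    (fun y hy => (hb' y).congr_of_eventuallyEq (hφb y hy))
    (fun y hy => by convert hb'' y using 3; exact (hφb y hy).self_of_nhds) fun x hx => by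
      have hxM : |x i₀| ≤ M := by
        by_contra! hxM
        linarith [hM x hxM, min_le_right (b (x i₀)) ((m + μ) / 2)]
      have : Real.cosh (α * x i₀) ≤ Real.cosh (α * M) := by
        rw [Real.cosh_le_cosh, abs_mul, abs_of_nonneg (Real.sqrt_nonneg _)]
        exact (mul_le_mul_of_nonneg_left hxM (Real.sqrt_nonneg _)).trans (le_abs_self _)
      show m + c * Real.cosh (α * x i₀) < (m + μ) / 2
      nlinarith
  have hcμ : c ≤ (μ - m) / 4 := by nlinarith [Real.one_le_cosh (α * M)]
  refine ⟨m + c, by linarith, fun x => le_trans (le_min ?_ (by linarith)) (hbelow x)⟩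
  nlinarith [Real.one_le_cosh (α * x i₀)]

theorem front_le_add_of_front_le {u : EuclideanSpace ℝ (Fin n) → ℝ} (hu : ContDiff ℝ 2 u)
    {f : ℝ → ℝ} (heq : ∀ x, lap u x = f (u x)) (i₀ : Fin n) {L P : ℝ≥0} (hf : LipschitzWith L f)
    {ψ ψ' : ℝ → ℝ} (hψ : LipschitzWith P ψ) (hanti : Antitone ψ) {κ m : ℝ}
    (hψ' : ∀ y < 0, HasDerivAt ψ (ψ' y) y) (hψ'' : ∀ y < 0, HasDerivAt ψ' (f (ψ y) + κ) y)
    (hm : ∀ x, m ≤ u x) {s d : ℝ} (hs : ∀ x, ψ (x i₀ - s) ≤ u x) (hd : 0 < d)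
    (hdm : P * d < m - ψ 0) (hdκ : (L * P + 2 * n) * d < κ) :
    ∀ x, ψ (x i₀ - (s + d)) ≤ u x := by
  by_contra! ⟨a, ha⟩
  have hPd : ψ (a i₀ - (s + d)) - ψ (a i₀ - s) ≤ P * d := by
    have := hψ.dist_le_mul (a i₀ - (s + d)) (a i₀ - s)
    rw [Real.dist_eq, Real.dist_eq, show a i₀ - (s + d) - (a i₀ - s) = -d by ring, abs_neg,
      abs_of_pos hd] at this
    exact (le_abs_self _).trans this
  have hbdd : BddBelow (range fun x => u x - ψ (x i₀ - s)) :=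
    ⟨0, by rintro _ ⟨x, rfl⟩; linarith [hs x]⟩
  -- near-contact points lie in `x i₀ < s`: beyond it the front stays below `m - P d`
  have hO_of_le : ∀ x, u x - ψ (x i₀ - s) ≤ u a - ψ (a i₀ - s) → x i₀ ∈ Iio s := by
    intro x hx
    rw [mem_Iio]
    by_contra! hxs
    linarith [hm x, hanti (sub_nonneg.2 hxs)]
  obtain ⟨q, hqa : u q - ψ (q i₀ - s) ≤ u a - ψ (a i₀ - s), -, hq⟩ :=
    exists_le_lap_add_of_barrier hu i₀ isOpen_Iio
    (hψ.continuous.comp (continuous_sub_right s))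
    (fun y hy => (hψ' _ (sub_neg.2 hy)).comp_sub_const y s)
    (fun y hy => (hψ'' _ (sub_neg.2 hy)).comp_sub_const y s) hbdd a hO_of_le hd
  rw [heq] at hq
  have hLip : f (u q) - f (ψ (q i₀ - s)) ≤ L * (u q - ψ (q i₀ - s)) := by
    have := hf.dist_le_mul (u q) (ψ (q i₀ - s))
    rw [Real.dist_eq, Real.dist_eq, abs_of_nonneg (sub_nonneg.2 (hs q))] at this
    exact (le_abs_self _).trans this
  have hgap : L * (u q - ψ (q i₀ - s)) ≤ L * (P * d) :=
    mul_le_mul_of_nonneg_left (by linarith) L.2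
  nlinarith

theorem front_le {u : EuclideanSpace ℝ (Fin n) → ℝ} (hu : ContDiff ℝ 2 u)
    {f : ℝ → ℝ} (heq : ∀ x, lap u x = f (u x)) (i₀ : Fin n) {L P : ℝ≥0} (hf : LipschitzWith L f)
    {ψ ψ' : ℝ → ℝ} (hψ : LipschitzWith P ψ) (hanti : Antitone ψ) {κ m c M : ℝ} (hκ : 0 < κ)
    (hψ' : ∀ y < 0, HasDerivAt ψ (ψ' y) y) (hψ'' : ∀ y < 0, HasDerivAt ψ' (f (ψ y) + κ) y)
    (hm : ∀ x, m ≤ u x) (hψ0 : ψ 0 < m) (hψc : ∀ y, ψ y ≤ c)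
    (hout : ∀ x, M < |x i₀| → c ≤ u x) (s : ℝ) (x : EuclideanSpace ℝ (Fin n)) :
    ψ (x i₀ - s) ≤ u x := by
  -- the front can be pushed forward by a fixed step `d`, starting from a position where it lies
  -- below `m` on the slab and below `c` elsewhere
  obtain ⟨d, hd, hdm, hdκ⟩ : ∃ d > 0, P * d < m - ψ 0 ∧ (L * P + 2 * n) * d < κ := by
    have hsmall (K σ : ℝ) (hσ : 0 < σ) : ∀ᶠ d in 𝓝 (0 : ℝ), K * d < σ :=
      (continuous_const_mul K).tendsto' 0 0 (mul_zero K) |>.eventually (gt_mem_nhds hσ)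
    have h := ((hsmall P _ (sub_pos.2 hψ0)).and (hsmall (L * P + 2 * n) _ hκ)).filter_mono
      (nhdsWithin_le_nhds (s := Ioi 0))
    obtain ⟨d, ⟨h1, h2⟩, hd⟩ := (h.and self_mem_nhdsWithin).exists
    exact ⟨d, hd, h1, h2⟩
  set s₀ := -(|M| + 1)
  have hs₀ : ∀ x, ψ (x i₀ - s₀) ≤ u x := by
    intro x
    by_cases hx : 0 ≤ x i₀ - s₀
    · linarith [hanti hx, hm x]
    · exact (hψc _).trans (hout x (by rw [lt_abs]; right; linarith [le_abs_self M]))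
  have hstep (k : ℕ) : ∀ x, ψ (x i₀ - (s₀ + k * d)) ≤ u x := by
    induction k with
    | zero => simpa using hs₀
    | succ k ih =>
      simpa [add_mul, add_assoc] using
        front_le_add_of_front_le hu heq i₀ hf hψ hanti hψ' hψ'' hm ih hd hdm hdκ
  obtain ⟨k, hk⟩ := exists_nat_gt ((s - s₀) / d)
  rw [div_lt_iff₀ hd] at hk
  exact (hanti (by linarith)).trans (hstep k x)

theorem exists_gt_forall_le_of_potential_pos {u : EuclideanSpace ℝ (Fin n) → ℝ}
    (hu : ContDiff ℝ 2 u) {W : ℝ → ℝ} (hW : Differentiable ℝ W) {L : ℝ≥0}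
    (hWL : LipschitzWith L (deriv W)) (hWnn : ∀ t, 0 ≤ W t) {μ : ℝ} (hWμ : W μ = 0)
    (heq : ∀ x, lap u x = deriv W (u x)) (i₀ : Fin n) {m : ℝ} (hm : ∀ x, m ≤ u x) (hmμ : m < μ)
    (hWm : 0 < W m) (hslab : ∀ c < μ, ∃ M, ∀ x, M < |x i₀| → c ≤ u x) :
    ∃ θ > m, ∀ x, θ ≤ u x := by
  obtain ⟨κ, hκ, a, ham, β, ⟨hmβ, hβμ⟩, hβ, hVβ⟩ := exists_tilted_strict_min hW hWnn hmμ hWμ hWm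
  set V : ℝ → ℝ := fun t => W t + κ * t
  have hV (t : ℝ) : HasDerivAt V (deriv W t + κ) t :=
    ((hW t).hasDerivAt.add ((hasDerivAt_id t).const_mul κ)).congr_deriv (by simp)
  have hquad : ∀ t ∈ Ico ((a + m) / 2) β, V t - V β ≤ L / 2 * (β - t) ^ 2 := fun t _ => by
    have := sub_le_mul_sq_of_lipschitzWith_deriv hV (LipschitzWith.of_dist_le_mul fun s t => by
      simpa [dist_add_right] using hWL.dist_le_mul s t) hβ t
    rwa [← neg_sub β t, neg_sq] at this
  obtain ⟨ψ, ψ', P, hψ, hanti, hψ0, hψβ, hrange, hψ', hψ''⟩ := exists_front (V := V)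
    (fun t => (hV t).differentiableAt) (by linarith : a < (a + m) / 2) (by linarith)
    (fun t ht => hVβ t ⟨by linarith [ht.1], ht.2⟩) hquad
  obtain ⟨M, hM⟩ := hslab β hβμ
  obtain ⟨y₁, hy₁⟩ := hrange (show (m + β) / 2 ∈ Ico ((a + m) / 2) β by
    constructor <;> linarith)
  refine ⟨(m + β) / 2, by linarith, fun x => ?_⟩
  have := front_le hu heq i₀ hWL hψ hanti hκ hψ' (fun y hy => (hV (ψ y)).deriv ▸ hψ'' y hy) hm
    (by linarith) (fun y => (hψβ y).le) hM (x i₀ - y₁) x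
  rwa [sub_sub_cancel, hy₁] at this

end Laplacian

theorem stmt18_general (n : ℕ) (hn : 0 < n) (W : ℝ → ℝ) (μm μ : ℝ)
    -- `W ∈ C^{1,1}(ℝ)`: `W` is `C¹` with Lipschitz derivative
    (hW1 : ContDiff ℝ 1 W) (hWlip : ∃ L : NNReal, LipschitzWith L (deriv W))
    (hWnn : ∀ t : ℝ, 0 ≤ W t) (hWμ : W μ = 0)
    (u : EuclideanSpace ℝ (Fin n) → ℝ) (hu : ContDiff ℝ 2 u)
    (heq : ∀ x, lap u x = deriv W (u x))
    (hbd : ∀ x, μm ≤ u x ∧ u x ≤ μ)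
    -- `u(x₁, x') → μ` uniformly in `x'` as `x₁ → ±∞`
    (hlim : ∀ δ > (0:ℝ), ∃ M : ℝ,
      ∀ x : EuclideanSpace ℝ (Fin n), M < |x (⟨0, hn⟩ : Fin n)| → |u x - μ| < δ) :
    ∀ x, u x = μ := by
  obtain ⟨L, hL⟩ := hWlip
  set m := ⨅ x, u x
  have hm : ∀ x, m ≤ u x := ciInf_le ⟨μm, by rintro _ ⟨x, rfl⟩; exact (hbd x).1⟩
  suffices μ ≤ m from fun x => le_antisymm (hbd x).2 (this.trans (hm x))
  by_contra! hmμ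
  have hslab : ∀ c < μ, ∃ M, ∀ x, M < |x ⟨0, hn⟩| → c ≤ u x := fun c hc => by
    obtain ⟨M, hM⟩ := hlim (μ - c) (sub_pos.2 hc)
    exact ⟨M, fun x hx => by linarith [(abs_lt.1 (hM x hx)).1]⟩
  obtain ⟨θ, hθ, hθu⟩ : ∃ θ > m, ∀ x, θ ≤ u x := by
    rcases (hWnn m).eq_or_lt with hWm | hWm
    · exact exists_gt_forall_le_of_lipschitzWith_of_eq_zero hu hL heq ⟨0, hn⟩ hm hmμ
        (deriv_eq_zero_of_forall_nonneg hWnn hWm.symm) hslab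
    · exact exists_gt_forall_le_of_potential_pos hu (hW1.differentiable one_ne_zero) hL hWnn hWμ
        heq ⟨0, hn⟩ hm hmμ hWm hslab
  obtain ⟨x, hx⟩ := exists_lt_of_ciInf_lt hθ
  exact (hθu x).not_gt hx

theorem stmt18 (n : ℕ) (hn : 0 < n) (W : ℝ → ℝ) (μm μ : ℝ) (hμ : μm < μ)
    -- `W ∈ C^{1,1}(ℝ)`: `W` is `C¹` with Lipschitz derivative
    (hW1 : ContDiff ℝ 1 W) (hWlip : ∃ L : NNReal, LipschitzWith L (deriv W))
    (hWnn : ∀ t : ℝ, 0 ≤ W t) (hWμ : W μ = 0)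
    (hWpos : ∀ t ∈ Set.Ioo μm μ, 0 < W t)
    (u : EuclideanSpace ℝ (Fin n) → ℝ) (hu : ContDiff ℝ 2 u)
    (heq : ∀ x, lap u x = deriv W (u x))
    (hbd : ∀ x, μm ≤ u x ∧ u x ≤ μ)
    -- `u(x₁, x') → μ` uniformly in `x'` as `x₁ → ±∞`
    (hlim : ∀ δ > (0:ℝ), ∃ M : ℝ,
      ∀ x : EuclideanSpace ℝ (Fin n), M < |x (⟨0, hn⟩ : Fin n)| → |u x - μ| < δ) :
    ∀ x, u x = μ :=
  stmt18_general n hn W μm μ hW1 hWlip hWnn hWμ u hu heq hbd hlim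
end
end
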